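/- Let L f(x) = (a − kx) f'(x) + (σ²/2) x f''(x) be the generator of the CIR process with a ≥ 0, k ∈ ℝ, σ > 0. For any f of class C^{m+2} on ℝ₊ with ‖f‖_{m+2,L} < ∞, one has ‖L f‖_{m,L+1} ≤ (2a + (2m+3)(|k| + σ²/2)) · ‖f‖_{m+2,L}. -/
import Mathlib
set_option maxHeartbeats 1000000


/-- Seminorm bound for the CIR generator `𝓛 f(x) = (a − kx) f'(x) + (σ²/2) x f''(x)`:
`‖𝓛 f‖_{m,L+1} ≤ (2a + (2m+3)(|k| + σ²/2)) ‖f‖_{m+2,L}`. -/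
theorem stmt_4 (a k σ : ℝ) (ha : 0 ≤ a) (hσ : 0 < σ) (m L : ℕ)
    (f : ℝ → ℝ) (hf : ContDiff ℝ (m + 2) f) (M : ℝ) (hM : 0 ≤ M)
    (hbound : ∀ j ≤ m + 2, ∀ x : ℝ, 0 ≤ x → |iteratedDeriv j f x| ≤ M * (1 + x ^ L)) :
    ∀ j ≤ m, ∀ x : ℝ, 0 ≤ x →
      |iteratedDeriv j
          (fun y => (a - k * y) * deriv f y + σ ^ 2 / 2 * y * iteratedDeriv 2 f y) x|
        ≤ (2 * a + (2 * m + 3) * (|k| + σ ^ 2 / 2)) * M * (1 + x ^ (L + 1)) := by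
  set c : ℝ := σ ^ 2 / 2 with hc
  have hc0 : 0 ≤ c := by positivity
  have hdiff : ∀ n : ℕ, n ≤ m + 1 → Differentiable ℝ (iteratedDeriv n f) := by
    intro n hn
    exact hf.differentiable_iteratedDeriv n (by exact_mod_cast Nat.lt_succ_of_le hn)
  have hd : ∀ n : ℕ, n ≤ m + 1 → ∀ x : ℝ,
      HasDerivAt (iteratedDeriv n f) (iteratedDeriv (n + 1) f x) x := by
    intro n hn x
    have h := (hdiff n hn x).hasDerivAt
    rwa [iteratedDeriv_succ]
  have key : ∀ i, i ≤ m → ∀ x : ℝ,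
      iteratedDeriv i (fun y => (a - k * y) * deriv f y + c * y * iteratedDeriv 2 f y) x
        = (a - k * x) * iteratedDeriv (i + 1) f x + c * x * iteratedDeriv (i + 2) f x
          + (i : ℝ) * (c * iteratedDeriv (i + 1) f x - k * iteratedDeriv i f x) := by
    intro i
    induction i with
    | zero =>
      intro _ x
      simp [iteratedDeriv_one]
    | succ i ih =>
      intro hi x
      have hi' : i ≤ m := le_of_lt (Nat.lt_of_succ_le hi)
      rw [iteratedDeriv_succ]
      have heq : iteratedDeriv i (fun y => (a - k * y) * deriv f y + c * y * iteratedDeriv 2 f y)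
          = fun y => (a - k * y) * iteratedDeriv (i + 1) f y + c * y * iteratedDeriv (i + 2) f y
            + (i : ℝ) * (c * iteratedDeriv (i + 1) f y - k * iteratedDeriv i f y) :=
        funext (ih hi')
      rw [heq]
      have h1 : HasDerivAt (fun y : ℝ => a - k * y) (-k) x := by
        simpa using ((hasDerivAt_id x).const_mul k).const_sub a
      have hF1 := hd (i + 1) (by omega) x
      have hF2 := hd (i + 2) (by omega) x
      have hF0 := hd i (by omega) x
      have h2 : HasDerivAt (fun y : ℝ => c * y) c x := by
        simpa using (hasDerivAt_id x).const_mul c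
      have hx : HasDerivAt (fun y => (a - k * y) * iteratedDeriv (i + 1) f y
            + c * y * iteratedDeriv (i + 2) f y
            + (i : ℝ) * (c * iteratedDeriv (i + 1) f y - k * iteratedDeriv i f y))
          ((-k) * iteratedDeriv (i + 1) f x + (a - k * x) * iteratedDeriv (i + 1 + 1) f x
            + (c * iteratedDeriv (i + 2) f x + c * x * iteratedDeriv (i + 2 + 1) f x)
            + (i : ℝ) * (c * iteratedDeriv (i + 1 + 1) f x - k * iteratedDeriv (i + 1) f x)) x :=
        ((h1.mul hF1).add (h2.mul hF2)).add
          (((hF1.const_mul c).sub (hF0.const_mul k)).const_mul (i : ℝ))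
      rw [hx.deriv]
      push_cast
      ring_nf
  intro j hj x hx
  rw [key j hj x]
  have hB : (0:ℝ) ≤ 1 + x ^ L := by positivity
  have b1 := hbound (j + 1) (by omega) x hx
  have b2 := hbound (j + 2) (by omega) x hx
  have b0 := hbound j (by omega) x hx
  have hjm : (j : ℝ) ≤ (m : ℝ) := by exact_mod_cast hj
  have hk0 : (0:ℝ) ≤ |k| := abs_nonneg k
  set F0 := iteratedDeriv j f x
  set F1 := iteratedDeriv (j + 1) f x
  set F2 := iteratedDeriv (j + 2) f x
  have habs0 : |F0| ≤ M * (1 + x ^ L) := b0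
  have habs1 : |F1| ≤ M * (1 + x ^ L) := b1
  have habs2 : |F2| ≤ M * (1 + x ^ L) := b2
  set C : ℝ := a + ((m : ℝ) + 1) * (|k| + c) with hC
  have hC0 : 0 ≤ C := by positivity
  have hprod : (1 + x) * (1 + x ^ L) ≤ 2 * (1 + x ^ (L + 1)) := by
    have hkey : 0 ≤ (x - 1) * (x ^ L - 1) := by
      rcases le_total 1 x with h | h
      · exact mul_nonneg (by linarith) (by nlinarith [one_le_pow₀ h (n := L)])
      · have h2 := mul_nonneg (by linarith : (0:ℝ) ≤ 1 - x) (by nlinarith [pow_le_one₀ (n := L) hx h] : (0:ℝ) ≤ 1 - x ^ L)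
        nlinarith [h2]
    have hps : x ^ (L + 1) = x ^ L * x := pow_succ x L
    nlinarith [hkey, hps]
  have e1 : |(a - k * x) * F1| ≤ (a + |k| * x) * (M * (1 + x ^ L)) := by
    rw [abs_mul]
    apply mul_le_mul _ habs1 (abs_nonneg _) (by positivity)
    calc |a - k * x| ≤ |a| + |k * x| := abs_sub a (k * x)
      _ = a + |k| * x := by rw [abs_of_nonneg ha, abs_mul, abs_of_nonneg hx]
  have e2 : |c * x * F2| ≤ c * x * (M * (1 + x ^ L)) := by
    rw [abs_mul]
    apply mul_le_mul _ habs2 (abs_nonneg _) (by positivity)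
    rw [abs_mul, abs_of_nonneg hc0, abs_of_nonneg hx]
  have e3 : |(j : ℝ) * (c * F1 - k * F0)| ≤ (j : ℝ) * (c + |k|) * (M * (1 + x ^ L)) := by
    rw [abs_mul, abs_of_nonneg (by positivity : (0:ℝ) ≤ (j : ℝ))]
    have : |c * F1 - k * F0| ≤ (c + |k|) * (M * (1 + x ^ L)) := by
      calc |c * F1 - k * F0| ≤ |c * F1| + |k * F0| := abs_sub _ _
        _ = c * |F1| + |k| * |F0| := by rw [abs_mul, abs_mul, abs_of_nonneg hc0]
        _ ≤ c * (M * (1 + x ^ L)) + |k| * (M * (1 + x ^ L)) := by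
            gcongr
        _ = (c + |k|) * (M * (1 + x ^ L)) := by ring
    calc (j : ℝ) * |c * F1 - k * F0| ≤ (j : ℝ) * ((c + |k|) * (M * (1 + x ^ L))) := by
          apply mul_le_mul_of_nonneg_left this (by positivity)
      _ = (j : ℝ) * (c + |k|) * (M * (1 + x ^ L)) := by ring
  calc |(a - k * x) * F1 + c * x * F2 + (j : ℝ) * (c * F1 - k * F0)|
      ≤ |(a - k * x) * F1| + |c * x * F2| + |(j : ℝ) * (c * F1 - k * F0)| := by
        exact (abs_add_le _ _).trans (by gcongr; exact abs_add_le _ _)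
    _ ≤ (a + |k| * x + c * x + (j : ℝ) * (c + |k|)) * (M * (1 + x ^ L)) := by
        linarith [e1, e2, e3]
    _ ≤ (C * (1 + x)) * (M * (1 + x ^ L)) := by
        apply mul_le_mul_of_nonneg_right _ (by positivity)
        nlinarith [mul_nonneg (sub_nonneg.mpr hjm) (by positivity : (0:ℝ) ≤ |k| + c),
          mul_nonneg hx (by positivity : (0:ℝ) ≤ a + (m : ℝ) * (|k| + c))]
    _ = C * M * ((1 + x) * (1 + x ^ L)) := by ring
    _ ≤ C * M * (2 * (1 + x ^ (L + 1))) := by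
        apply mul_le_mul_of_nonneg_left hprod (by positivity)
    _ = (2 * C) * M * (1 + x ^ (L + 1)) := by ring
    _ ≤ (2 * a + (2 * (m : ℝ) + 3) * (|k| + c)) * M * (1 + x ^ (L + 1)) := by
        have h1 : (0:ℝ) ≤ 1 + x ^ (L + 1) := by positivity
        have h2 : 2 * C ≤ 2 * a + (2 * (m : ℝ) + 3) * (|k| + c) := by
          rw [hC]; nlinarith [hk0, hc0]
        exact mul_le_mul_of_nonneg_right (mul_le_mul_of_nonneg_right h2 hM) h1
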